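/- arXiv:2310.05805 — 4 statements merged into one kernel-verified Lean document; each statement's English description precedes it below -/
import Mathlib

section
/- Let $M_0 \in \mathbb{R}^{p \times r}$ with $\mathrm{rank}(M_0) = q < p$, let $\Sigma \in \mathbb{R}^{p \times p}$ be positive definite, and let $R \in \mathbb{R}^{p \times (p-q)}$ have columns forming an orthonormal basis of $\ker(M_0^\top)$. For each $k$, the matrix $B_k := k^2 M_0 M_0^\top + \Sigma$ is invertible, and $\lim_{k \to \infty} B_k^{-1} = R (R^\top \Sigma R)^{-1} R^\top$. -/
/-! With `P = R (RᵀΣR)⁻¹ Rᵀ`, the relations `B R = Σ R` and `Rᵀ B = Rᵀ Σ` give the exact identity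
`B⁻¹ = P + (1 - PΣ) B⁻¹ (1 - ΣP)`. A dimension count shows `ker Rᵀ = range M₀`, so both outer
factors go through `M₀` and `B⁻¹ - P = Vᵀ C W` with `C = M₀ᵀ B⁻¹ M₀`. Writing
`C = M₀ᵀ B⁻¹ B B⁻¹ M₀` gives `C = k² C² + D` with `D` positive semidefinite, and comparing
diagonal entries forces `|C i j| ≤ 1 / k²`. -/

open Matrix Filter Topology

namespace Matrix

variable {m n l : Type*} [Fintype m] [Fintype n] [Fintype l]

theorem PosDef.smul_mul_transpose_add {S : Matrix m m ℝ} (hS : S.PosDef) {t : ℝ} (ht : 0 ≤ t)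
    (M : Matrix m l ℝ) : (t • (M * Mᵀ) + S).PosDef := by
  refine PosDef.posSemidef_add (PosSemidef.smul ?_ ht) hS
  simpa using posSemidef_self_mul_conjTranspose M

theorem PosDef.isUnit_det_transpose_mul_mul {S : Matrix m m ℝ} (hS : S.PosDef)
    [DecidableEq n] {R : Matrix m n ℝ} (hR : Rᵀ * R = 1) : IsUnit (Rᵀ * S * R).det := by
  have hRinj : Function.Injective R.mulVec :=
    Function.LeftInverse.injective (g := Rᵀ.mulVec) fun v => by
      rw [mulVec_mulVec, hR, one_mulVec]
  simpa using (isUnit_iff_isUnit_det _).mp (hS.conjTranspose_mul_mul_same hRinj).isUnit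

theorem range_mulVecLin_eq_ker_of_transpose_mul_eq_zero {K : Type*} [Field K] [DecidableEq n]
    {M : Matrix m l K} {R : Matrix m n K} (hR : Rᵀ * R = 1) (hMR : Mᵀ * R = 0)
    (hrank : M.rank + Fintype.card n = Fintype.card m) :
    LinearMap.range M.mulVecLin = LinearMap.ker Rᵀ.mulVecLin := by
  have hRM : Rᵀ * M = 0 := by simpa [transpose_mul] using congrArg transpose hMR
  have hle : LinearMap.range M.mulVecLin ≤ LinearMap.ker Rᵀ.mulVecLin := by
    rintro _ ⟨v, rfl⟩
    rw [LinearMap.mem_ker, mulVecLin_apply, mulVecLin_apply, mulVec_mulVec, hRM, zero_mulVec]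
  have hrankR : Rᵀ.rank = Fintype.card n :=
    le_antisymm (rank_le_card_height _) (by simpa [hR] using rank_mul_le_left Rᵀ R)
  have hker := LinearMap.finrank_range_add_finrank_ker Rᵀ.mulVecLin
  rw [← rank, hrankR, Module.finrank_fintype_fun_eq_card] at hker
  exact Submodule.eq_of_le_of_finrank_eq hle (by rw [← rank]; omega)

theorem exists_mul_eq_of_transpose_mul_eq_zero {K : Type*} [Field K] [DecidableEq n]
    {l' : Type*} [Fintype l'] [DecidableEq l']
    {M : Matrix m l K} {R : Matrix m n K} (hR : Rᵀ * R = 1) (hMR : Mᵀ * R = 0)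
    (hrank : M.rank + Fintype.card n = Fintype.card m)
    {Q : Matrix m l' K} (hQ : Rᵀ * Q = 0) : ∃ W : Matrix l l' K, M * W = Q := by
  have hcol : ∀ j, Q *ᵥ Pi.single j 1 ∈ LinearMap.range M.mulVecLin := fun j => by
    rw [range_mulVecLin_eq_ker_of_transpose_mul_eq_zero hR hMR hrank, LinearMap.mem_ker,
      mulVecLin_apply, mulVec_mulVec, hQ, zero_mulVec]
  choose w hw using hcol
  refine ⟨(of w)ᵀ, ext fun i j => ?_⟩
  simpa [mul_apply, mulVec, dotProduct, Pi.single_apply] using congrFun (hw j) i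

theorem nonsing_inv_eq_add_of_mul_eq {K : Type*} [Field K] [DecidableEq m] [DecidableEq n]
    {B S : Matrix m m K} {L : Matrix n m K} {R : Matrix m n K} (hB : IsUnit B.det)
    (hG : IsUnit (L * S * R).det) (hBR : B * R = S * R) (hLB : L * B = L * S) :
    B⁻¹ = R * (L * S * R)⁻¹ * L +
      (1 - R * (L * S * R)⁻¹ * L * S) * B⁻¹ * (1 - S * (R * (L * S * R)⁻¹ * L)) := by
  set P := R * (L * S * R)⁻¹ * L
  have hBSP : B⁻¹ * S * P = P := by
    rw [show B⁻¹ * S * P = B⁻¹ * (B * P) by simp only [P, ← Matrix.mul_assoc, hBR],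
      ← Matrix.mul_assoc, nonsing_inv_mul _ hB, Matrix.one_mul]
  have hPSB : P * S * B⁻¹ = P := by
    rw [show P * S * B⁻¹ = P * B * B⁻¹ by simp only [P, Matrix.mul_assoc, hLB],
      Matrix.mul_assoc, mul_nonsing_inv _ hB, Matrix.mul_one]
  have hPSP : P * S * P = P := by
    simp only [P, Matrix.mul_assoc]
    rw [← Matrix.mul_assoc L, ← Matrix.mul_assoc L, ← Matrix.mul_assoc (L * S),
      mul_nonsing_inv_cancel_left _ _ hG]
  simp only [Matrix.sub_mul, Matrix.mul_sub, Matrix.one_mul, Matrix.mul_one, ← Matrix.mul_assoc,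
    hBSP, hPSB, hPSP]
  abel

theorem mul_one_sub_mul_eq_zero {K : Type*} [Field K] [DecidableEq m] [DecidableEq n]
    {S : Matrix m m K} {L : Matrix n m K} {R : Matrix m n K} (hG : IsUnit (L * S * R).det) :
    L * (1 - S * (R * (L * S * R)⁻¹ * L)) = 0 := by
  rw [Matrix.mul_sub, Matrix.mul_one, ← Matrix.mul_assoc, ← Matrix.mul_assoc, ← Matrix.mul_assoc,
    mul_nonsing_inv _ hG, Matrix.one_mul, sub_self]

theorem one_sub_mul_mul_eq_zero {K : Type*} [Field K] [DecidableEq m] [DecidableEq n]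
    {S : Matrix m m K} {L : Matrix n m K} {R : Matrix m n K} (hG : IsUnit (L * S * R).det) :
    (1 - R * (L * S * R)⁻¹ * L * S) * R = 0 := by
  rw [Matrix.sub_mul, Matrix.one_mul, Matrix.mul_assoc, Matrix.mul_assoc, Matrix.mul_assoc,
    ← Matrix.mul_assoc L, nonsing_inv_mul _ hG, Matrix.mul_one, sub_self]

theorem exists_nonsing_inv_eq_add_mul_transpose_mul_inv_mul {K : Type*} [Field K]
    [DecidableEq m] [DecidableEq n] {S : Matrix m m K} {M : Matrix m l K}
    {R : Matrix m n K} (hR : Rᵀ * R = 1) (hMR : Mᵀ * R = 0)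
    (hrank : M.rank + Fintype.card n = Fintype.card m) (hG : IsUnit (Rᵀ * S * R).det) :
    ∃ V W : Matrix l m K, ∀ t : K, IsUnit (t • (M * Mᵀ) + S).det →
      (t • (M * Mᵀ) + S)⁻¹ =
        R * (Rᵀ * S * R)⁻¹ * Rᵀ + Vᵀ * (Mᵀ * (t • (M * Mᵀ) + S)⁻¹ * M) * W := by
  obtain ⟨W, hW⟩ := exists_mul_eq_of_transpose_mul_eq_zero hR hMR hrank
    (mul_one_sub_mul_eq_zero hG)
  obtain ⟨V, hV⟩ := exists_mul_eq_of_transpose_mul_eq_zero hR hMR hrank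
    (Q := (1 - R * (Rᵀ * S * R)⁻¹ * Rᵀ * S)ᵀ)
    (by rw [← transpose_mul, one_sub_mul_mul_eq_zero hG, transpose_zero])
  have hRM : Rᵀ * M = 0 := by simpa [transpose_mul] using congrArg transpose hMR
  refine ⟨V, W, fun t hB => ?_⟩
  have hBR : (t • (M * Mᵀ) + S) * R = S * R := by
    rw [Matrix.add_mul, Matrix.smul_mul, Matrix.mul_assoc, hMR, Matrix.mul_zero, smul_zero,
      zero_add]
  have hRB : Rᵀ * (t • (M * Mᵀ) + S) = Rᵀ * S := by
    rw [Matrix.mul_add, Matrix.mul_smul, ← Matrix.mul_assoc, hRM, Matrix.zero_mul, smul_zero,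
      zero_add]
  have h := nonsing_inv_eq_add_of_mul_eq hB hG hBR hRB
  rw [← transpose_transpose (1 - _), ← hV, ← hW, transpose_mul] at h
  simpa only [Matrix.mul_assoc] using h

theorem transpose_mul_inv_mul_eq_smul_mul_self_add {K : Type*} [Field K] [DecidableEq m]
    {B S : Matrix m m K} {M : Matrix m l K} {t : K} (hB : IsUnit B.det) (hBT : Bᵀ = B)
    (hBdef : B = t • (M * Mᵀ) + S) :
    Mᵀ * B⁻¹ * M = t • ((Mᵀ * B⁻¹ * M) * (Mᵀ * B⁻¹ * M)) + (B⁻¹ * M)ᵀ * S * (B⁻¹ * M) := by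
  have hinvT : (B⁻¹ * M)ᵀ = Mᵀ * B⁻¹ := by rw [transpose_mul, transpose_nonsing_inv, hBT]
  calc Mᵀ * B⁻¹ * M = Mᵀ * B⁻¹ * B * (B⁻¹ * M) := by
        rw [nonsing_inv_mul_cancel_right B Mᵀ hB, Matrix.mul_assoc]
    _ = _ := by
        nth_rw 2 [hBdef]
        simp only [hinvT, Matrix.mul_add, Matrix.add_mul, Matrix.mul_smul, Matrix.smul_mul,
          Matrix.mul_assoc]

theorem abs_apply_le_inv_of_eq_smul_mul_self_add {C D : Matrix n n ℝ} (hC : Cᵀ = C)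
    (hD : D.PosSemidef) {t : ℝ} (ht : 0 < t) (h : C = t • (C * C) + D) (i j : n) :
    |C i j| ≤ t⁻¹ := by
  have hrow : t * ∑ x, C i x ^ 2 ≤ C i i := by
    have hdiag : C i i = t * ∑ x, C i x * C x i + D i i := by
      simpa [mul_apply] using congrFun (congrFun h i) i
    have hsymm : ∀ x, C x i = C i x := fun x => congrFun (congrFun hC i) x
    simp only [hsymm, ← sq] at hdiag
    linarith [hD.diag_nonneg (i := i)]
  have hle_row : ∀ y, C i y ^ 2 ≤ ∑ x, C i x ^ 2 := fun y =>
    Finset.single_le_sum (f := fun x => C i x ^ 2) (fun _ _ => sq_nonneg _) (Finset.mem_univ y)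
  have htt : t * t⁻¹ = 1 := mul_inv_cancel₀ ht.ne'
  have hii : C i i ≤ t⁻¹ := by
    nlinarith [hle_row i, inv_pos.2 ht]
  have hij : C i j ^ 2 ≤ t⁻¹ ^ 2 := by
    nlinarith [hle_row j, inv_pos.2 ht]
  exact abs_le_of_sq_le_sq hij (inv_pos.2 ht).le

theorem tendsto_transpose_mul_inv_mul_of_posDef [DecidableEq m] {S : Matrix m m ℝ}
    (hS : S.PosDef) (M : Matrix m l ℝ) :
    Tendsto (fun k : ℕ => Mᵀ * ((k : ℝ) ^ 2 • (M * Mᵀ) + S)⁻¹ * M) atTop (𝓝 0) := by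
  have hbound : ∀ k : ℕ, 1 ≤ k → ∀ i j,
      |(Mᵀ * ((k : ℝ) ^ 2 • (M * Mᵀ) + S)⁻¹ * M) i j| ≤ ((k : ℝ) ^ 2)⁻¹ := by
    intro k hk i j
    have hB := hS.smul_mul_transpose_add (sq_nonneg (k : ℝ)) M
    have hBT : ((k : ℝ) ^ 2 • (M * Mᵀ) + S)ᵀ = (k : ℝ) ^ 2 • (M * Mᵀ) + S := by
      simpa using hB.isHermitian.eq
    have hBinvT := transpose_nonsing_inv ((k : ℝ) ^ 2 • (M * Mᵀ) + S)
    refine abs_apply_le_inv_of_eq_smul_mul_self_add ?_ ?_ (by positivity)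
      (transpose_mul_inv_mul_eq_smul_mul_self_add
        ((isUnit_iff_isUnit_det _).mp hB.isUnit) hBT rfl) i j
    · rw [transpose_mul, transpose_mul, transpose_transpose, hBinvT, hBT, Matrix.mul_assoc]
    · simpa using hS.posSemidef.conjTranspose_mul_mul_same (((k : ℝ) ^ 2 • (M * Mᵀ) + S)⁻¹ * M)
  have hdecay : Tendsto (fun k : ℕ => ((k : ℝ) ^ 2)⁻¹) atTop (𝓝 0) :=
    tendsto_inv_atTop_zero.comp ((tendsto_pow_atTop two_ne_zero).comp tendsto_natCast_atTop_atTop)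
  refine tendsto_pi_nhds.2 fun i => tendsto_pi_nhds.2 fun j => squeeze_zero_norm' ?_ hdecay
  filter_upwards [eventually_ge_atTop 1] with k hk using hbound k hk i j

end Matrix

theorem stmt0_general {p r q : ℕ}
    (M0 : Matrix (Fin p) (Fin r) ℝ) (hrank : M0.rank = q)
    (Sig : Matrix (Fin p) (Fin p) ℝ) (hSig : Sig.PosDef)
    (R : Matrix (Fin p) (Fin (p - q)) ℝ)
    (hRorth : Rᵀ * R = 1) (hRker : M0ᵀ * R = 0)
    (B : ℕ → Matrix (Fin p) (Fin p) ℝ)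
    (hB : ∀ k : ℕ, B k = ((k : ℝ) ^ 2) • (M0 * M0ᵀ) + Sig) :
    (∀ k : ℕ, IsUnit (B k).det) ∧
      Tendsto (fun k : ℕ => (B k)⁻¹) atTop (𝓝 (R * (Rᵀ * Sig * R)⁻¹ * Rᵀ)) := by
  have hBdet : ∀ k, IsUnit (B k).det := fun k =>
    (isUnit_iff_isUnit_det _).mp (hB k ▸ hSig.smul_mul_transpose_add (sq_nonneg _) M0).isUnit
  have hcard : M0.rank + Fintype.card (Fin (p - q)) = Fintype.card (Fin p) := by
    have := M0.rank_le_height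
    simp only [Fintype.card_fin]
    omega
  obtain ⟨V, W, hdecomp⟩ := exists_nonsing_inv_eq_add_mul_transpose_mul_inv_mul hRorth hRker
    hcard (hSig.isUnit_det_transpose_mul_mul hRorth)
  have hlim : Tendsto (fun k => M0ᵀ * (B k)⁻¹ * M0) atTop (𝓝 0) := by
    simpa only [hB] using tendsto_transpose_mul_inv_mul_of_posDef hSig M0
  have hcont : Continuous fun C : Matrix (Fin r) (Fin r) ℝ => Vᵀ * C * W :=
    (continuous_const.matrix_mul continuous_id).matrix_mul continuous_const
  have hinv : ∀ k, (B k)⁻¹ = R * (Rᵀ * Sig * R)⁻¹ * Rᵀ + Vᵀ * (M0ᵀ * (B k)⁻¹ * M0) * W :=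
    fun k => by rw [hB k]; exact hdecomp _ (hB k ▸ hBdet k)
  refine ⟨hBdet, ?_⟩
  rw [funext hinv]
  simpa using tendsto_const_nhds.add ((hcont.tendsto 0).comp hlim)

/-- For `M₀` of rank `q < p`, `Σ` positive definite, and `R` whose columns
form an orthonormal basis of `ker(M₀ᵀ)`, each `B k = k² M₀M₀ᵀ + Σ` is invertible and
`(B k)⁻¹ → R (Rᵀ Σ R)⁻¹ Rᵀ` as `k → ∞`. -/
theorem stmt0 {p r q : ℕ} (hq : q < p)
    (M0 : Matrix (Fin p) (Fin r) ℝ) (hrank : M0.rank = q)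
    (Sig : Matrix (Fin p) (Fin p) ℝ) (hSig : Sig.PosDef)
    (R : Matrix (Fin p) (Fin (p - q)) ℝ)
    (hRorth : Rᵀ * R = 1) (hRker : M0ᵀ * R = 0)
    (B : ℕ → Matrix (Fin p) (Fin p) ℝ)
    (hB : ∀ k : ℕ, B k = ((k : ℝ) ^ 2) • (M0 * M0ᵀ) + Sig) :
    (∀ k : ℕ, IsUnit (B k).det) ∧
      Tendsto (fun k : ℕ => (B k)⁻¹) atTop (𝓝 (R * (Rᵀ * Sig * R)⁻¹ * Rᵀ)) :=
  stmt0_general M0 hrank Sig hSig R hRorth hRker B hB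
end

section
/- Let $(U, V, X, Y, Z)$ be random variables with $Y = f_0(X) + U$, $X = M_0 Z + V$, $(U,V) \perp Z$, and suppose $q = \mathrm{rank}(M_0) < p$ with $R$ an orthonormal basis of $\ker(M_0^\top)$. Define the boosted control function $f_\star(x) := f_0(x) + E[\gamma_0(V) \mid R^\top X = R^\top x]$ where $\gamma_0(V) := E[U \mid V]$. Then the residual $Y - f_\star(X)$ equals $U - E[\gamma_0(V) \mid R^\top V]$ almost surely, i.e., it is a measurable function of $(U, V)$ alone. -/
open Matrix MeasureTheory ProbabilityTheory

/-- in the model `Y = f₀(X) + U`, `X = M₀ Z + V` with `(U,V) ⟂ Z` and `R` an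
orthonormal basis of `ker(M₀ᵀ)` (with `q = rank M₀ < p`), the residual of the boosted
control function `f⋆(x) = f₀(x) + E[γ₀(V) | Rᵀ X = Rᵀ x]` (where `γ₀(V) = E[U|V]`)
satisfies `Y - f⋆(X) = U - E[γ₀(V) | Rᵀ V]` almost surely. -/
theorem stmt3 {p r q : ℕ} {Ω : Type*} [MeasurableSpace Ω]
    (μ : Measure Ω) [IsProbabilityMeasure μ]
    (hq : q < p)
    (M0 : Matrix (Fin p) (Fin r) ℝ) (hrank : M0.rank = q)
    (R : Matrix (Fin p) (Fin (p - q)) ℝ)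
    (hRorth : Rᵀ * R = 1) (hRker : M0ᵀ * R = 0)
    (U Y : Ω → ℝ) (V X : Ω → Fin p → ℝ) (Z : Ω → Fin r → ℝ)
    (hUm : Measurable U) (hVm : Measurable V) (hZm : Measurable Z)
    (hUint : Integrable U μ)
    (f0 : (Fin p → ℝ) → ℝ) (hf0 : Measurable f0)
    (hY : ∀ ω, Y ω = f0 (X ω) + U ω)
    (hX : ∀ ω, X ω = M0 *ᵥ Z ω + V ω)
    (hindep : IndepFun (fun ω => (U ω, V ω)) Z μ)
    (γ0V : Ω → ℝ)
    (hγ0V : γ0V =ᵐ[μ] μ[U | MeasurableSpace.comap V inferInstance])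
    (fstarX : Ω → ℝ)
    (hfstar : fstarX =ᵐ[μ] fun ω => f0 (X ω) +
      (μ[γ0V | MeasurableSpace.comap (fun ω => Rᵀ *ᵥ X ω) inferInstance]) ω) :
    (fun ω => Y ω - fstarX ω) =ᵐ[μ]
      fun ω => U ω -
        (μ[γ0V | MeasurableSpace.comap (fun ω => Rᵀ *ᵥ V ω) inferInstance]) ω := by
  have hRM : Rᵀ * M0 = 0 := by
    have := congrArg Matrix.transpose hRker
    simpa [Matrix.transpose_mul] using this
  have hfun : (fun ω => Rᵀ *ᵥ X ω) = fun ω => Rᵀ *ᵥ V ω := by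
    funext ω
    rw [hX ω, Matrix.mulVec_add, Matrix.mulVec_mulVec, hRM]
    simp
  filter_upwards [hfstar] with ω hω
  rw [hω, hY ω, ← hfun]
  ring
end

section
/- Let $f, f_0: \mathbb{R}^p \to \mathbb{R}$ and $\gamma, \gamma_0: \mathbb{R}^p \to \mathbb{R}$ be measurable, and let $(X, V)$ be random variables such that $f(X) + \gamma(V) = f_0(X) + \gamma_0(V)$ almost surely. Set $h := f - f_0$ and $g := \gamma - \gamma_0$. If the implication "$h(X) + g(V) = 0$ a.s. implies there exists measurable $\delta: \mathbb{R}^{p-q} \to \mathbb{R}$ with $h(X) = \delta(R^\top X)$ a.s." holds, then $f(X) + E[\gamma(V) \mid R^\top X] = f_0(X) + E[\gamma_0(V) \mid R^\top X]$ almost surely, where $R^\top X = R^\top V$ almost surely. -/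
open Matrix MeasureTheory

/-!
If `f(X) + γ(V) = f₀(X) + γ₀(V)` a.s., the identification hypothesis gives a measurable `δ` with
`(f - f₀)(X) = δ(Rᵀ X)` a.s., hence `(γ - γ₀)(V) = -δ(Rᵀ X)` a.s. The right-hand side is
`σ(Rᵀ X)`-measurable, so it is its own conditional expectation given `Rᵀ X`; by linearity of
conditional expectation, `E[γ(V) | Rᵀ X] - E[γ₀(V) | Rᵀ X] = -(f - f₀)(X)` a.s.
-/

theorem add_condExp_ae_eq_of_add_ae_eq {Ω : Type*} {m m₀ : MeasurableSpace Ω} {μ : Measure[m₀] Ω}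
    (hm : m ≤ m₀) [SigmaFinite (μ.trim hm)] {F F₀ G G₀ : Ω → ℝ}
    (hG : Integrable G μ) (hG₀ : Integrable G₀ μ)
    (heq : ∀ᵐ ω ∂μ, F ω + G ω = F₀ ω + G₀ ω) (hF : AEStronglyMeasurable[m] (F - F₀) μ) :
    (fun ω => F ω + μ[G | m] ω) =ᵐ[μ] fun ω => F₀ ω + μ[G₀ | m] ω := by
  have hGF : G - G₀ =ᵐ[μ] -(F - F₀) := by
    filter_upwards [heq] with ω h
    simp only [Pi.sub_apply, Pi.neg_apply]
    linarith
  have hcond : μ[G | m] - μ[G₀ | m] =ᵐ[μ] -(F - F₀) :=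
    calc μ[G | m] - μ[G₀ | m] =ᵐ[μ] μ[G - G₀ | m] := (condExp_sub hG hG₀ m).symm
      _ =ᵐ[μ] G - G₀ :=
        condExp_of_aestronglyMeasurable' hm (hF.neg.congr hGF.symm) (hG.sub hG₀)
      _ =ᵐ[μ] -(F - F₀) := hGF
  filter_upwards [hcond] with ω h
  simp only [Pi.sub_apply, Pi.neg_apply] at h
  linarith

theorem stmt14_general {p q : ℕ} {Ω : Type*} [MeasurableSpace Ω]
    (μ : Measure Ω) [IsProbabilityMeasure μ]
    (R : Matrix (Fin p) (Fin (p - q)) ℝ)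
    (X V : Ω → Fin p → ℝ) (hXm : Measurable X)
    (f f0 γ γ0 : (Fin p → ℝ) → ℝ)
    (hγint : Integrable (fun ω => γ (V ω)) μ)
    (hγ0int : Integrable (fun ω => γ0 (V ω)) μ)
    (heq : ∀ᵐ ω ∂μ, f (X ω) + γ (V ω) = f0 (X ω) + γ0 (V ω))
    (hident : (∀ᵐ ω ∂μ, (f (X ω) - f0 (X ω)) + (γ (V ω) - γ0 (V ω)) = 0) →
      ∃ δ : (Fin (p - q) → ℝ) → ℝ, Measurable δ ∧
        ∀ᵐ ω ∂μ, f (X ω) - f0 (X ω) = δ (Rᵀ *ᵥ X ω)) :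
    (fun ω => f (X ω) +
        (μ[fun ω => γ (V ω) |
          MeasurableSpace.comap (fun ω => Rᵀ *ᵥ X ω) inferInstance]) ω) =ᵐ[μ]
      fun ω => f0 (X ω) +
        (μ[fun ω => γ0 (V ω) |
          MeasurableSpace.comap (fun ω => Rᵀ *ᵥ X ω) inferInstance]) ω := by
  have hRX : Measurable fun ω => Rᵀ *ᵥ X ω :=
    (Matrix.mulVecLin Rᵀ).continuous_of_finiteDimensional.measurable.comp hXm
  obtain ⟨δ, hδm, hδ⟩ := hident <| by
    filter_upwards [heq] with ω h
    linarith
  have hδRX : StronglyMeasurable[MeasurableSpace.comap (fun ω => Rᵀ *ᵥ X ω) inferInstance]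
      fun ω => δ (Rᵀ *ᵥ X ω) :=
    (hδm.comp (comap_measurable _)).stronglyMeasurable
  exact add_condExp_ae_eq_of_add_ae_eq hRX.comap_le hγint hγ0int heq
    (hδRX.aestronglyMeasurable.congr (Filter.EventuallyEq.symm hδ))

/-- if `f(X) + γ(V) = f₀(X) + γ₀(V)` a.s., `Rᵀ X = Rᵀ V` a.s., and every
a.s. solution of `h(X) + g(V) = 0` satisfies `h(X) = δ(Rᵀ X)` a.s. for some measurable
`δ`, then `f(X) + E[γ(V)|Rᵀ X] = f₀(X) + E[γ₀(V)|Rᵀ X]` a.s. -/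
theorem stmt14 {p q : ℕ} {Ω : Type*} [MeasurableSpace Ω]
    (μ : Measure Ω) [IsProbabilityMeasure μ]
    (R : Matrix (Fin p) (Fin (p - q)) ℝ)
    (X V : Ω → Fin p → ℝ) (hXm : Measurable X) (hVm : Measurable V)
    (f f0 γ γ0 : (Fin p → ℝ) → ℝ)
    (hfm : Measurable f) (hf0m : Measurable f0)
    (hγm : Measurable γ) (hγ0m : Measurable γ0)
    (hγint : Integrable (fun ω => γ (V ω)) μ)
    (hγ0int : Integrable (fun ω => γ0 (V ω)) μ)
    (heq : ∀ᵐ ω ∂μ, f (X ω) + γ (V ω) = f0 (X ω) + γ0 (V ω))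
    (hRXV : ∀ᵐ ω ∂μ, Rᵀ *ᵥ X ω = Rᵀ *ᵥ V ω)
    (hident : (∀ᵐ ω ∂μ, (f (X ω) - f0 (X ω)) + (γ (V ω) - γ0 (V ω)) = 0) →
      ∃ δ : (Fin (p - q) → ℝ) → ℝ, Measurable δ ∧
        ∀ᵐ ω ∂μ, f (X ω) - f0 (X ω) = δ (Rᵀ *ᵥ X ω)) :
    (fun ω => f (X ω) +
        (μ[fun ω => γ (V ω) |
          MeasurableSpace.comap (fun ω => Rᵀ *ᵥ X ω) inferInstance]) ω) =ᵐ[μ]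
      fun ω => f0 (X ω) +
        (μ[fun ω => γ0 (V ω) |
          MeasurableSpace.comap (fun ω => Rᵀ *ᵥ X ω) inferInstance]) ω :=
  stmt14_general μ R X V hXm f f0 γ γ0 hγint hγ0int heq hident
end

section
/- Assume $f_\star$ is invariant (its risk $\mathcal{R}(P, f_\star) = E_P[(Y - f_\star(X))^2]$ is the same finite constant $\rho$ for all $P \in \mathcal{P}_0$) and that $\inf_{P \in \mathcal{P}_0} E_P[(f_\star(X) - E_P[Y \mid X])^2] = 0$. Then $\sup_{P \in \mathcal{P}_0} \mathcal{R}(P, f_\star) = \inf_{f \in \mathcal{F}} \sup_{P \in \mathcal{P}_0} \mathcal{R}(P, f)$, where $\mathcal{F}$ is any class of measurable functions containing $f_\star$ and $E_P[Y^2] < \infty$ for all $P$. -/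
/-! Write `M = E[Y|X]`. Since `Y - M` is orthogonal in `L²` to every square-integrable function
of `X`, Pythagoras gives `R(P, f) = E(Y - M)² + E(f(X) - M)²` for every measurable `f` (both
sides are infinite when `f(X) ∉ L²`), so `R(P, f⋆) ≤ R(P, f) + E(f⋆(X) - M)²`. By invariance the
left side is `ρ` for every `P`; taking the infimum over `P` of the gap term shows
`ρ ≤ sup_P R(P, f)` for every `f ∈ 𝓕`. -/

open MeasureTheory
open scoped ENNReal

/-- The risk of a prediction function `f` under a joint distribution `P` of `(X, Y)`. -/
noncomputable def risk {p : ℕ} (P : Measure ((Fin p → ℝ) × ℝ))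
    (f : (Fin p → ℝ) → ℝ) : ℝ≥0∞ :=
  ∫⁻ ω, ENNReal.ofReal ((ω.2 - f ω.1) ^ 2) ∂P

/-- The expected squared distance between `f⋆(X)` and the conditional mean `E_P[Y|X]`. -/
noncomputable def gap {p : ℕ} (P : Measure ((Fin p → ℝ) × ℝ))
    (fstar : (Fin p → ℝ) → ℝ) : ℝ≥0∞ :=
  ∫⁻ ω, ENNReal.ofReal
    ((fstar ω.1 -
      (P[fun ω : (Fin p → ℝ) × ℝ => ω.2 |
        MeasurableSpace.comap Prod.fst inferInstance]) ω) ^ 2) ∂P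

section ConditionalExpectation

variable {α : Type*} {m m₀ : MeasurableSpace α} {μ : Measure α} {Y q : α → ℝ}

lemma lintegral_ofReal_sq_ne_top_iff_memLp {f : α → ℝ} (hf : AEStronglyMeasurable f μ) :
    ∫⁻ x, ENNReal.ofReal (f x ^ 2) ∂μ ≠ ⊤ ↔ MemLp f 2 μ := by
  rw [lintegral_ofReal_ne_top_iff_integrable (f := fun x => f x ^ 2) (hf.pow 2)
    (.of_forall fun x => sq_nonneg (f x)), memLp_two_iff_integrable_sq hf]

lemma lintegral_ofReal_sq_eq_ofReal_integral {f : α → ℝ} (hf : MemLp f 2 μ) :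
    ∫⁻ x, ENNReal.ofReal (f x ^ 2) ∂μ = ENNReal.ofReal (∫ x, f x ^ 2 ∂μ) :=
  (ofReal_integral_eq_lintegral_ofReal hf.integrable_sq (.of_forall fun _ => sq_nonneg _)).symm

variable [IsFiniteMeasure μ]

lemma integral_mul_sub_condExp_eq_zero (hm : m ≤ m₀) (hY : MemLp Y 2 μ)
    (hq : StronglyMeasurable[m] q) (hq₂ : MemLp q 2 μ) :
    ∫ x, q x * (Y x - μ[Y|m] x) ∂μ = 0 := by
  have hqY : Integrable (fun x => q x * Y x) μ := hq₂.integrable_mul hY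
  have hqM : Integrable (fun x => q x * μ[Y|m] x) μ := hq₂.integrable_mul (hY.condExp one_le_two)
  have pull_out : μ[fun x => q x * Y x|m] =ᵐ[μ] fun x => q x * μ[Y|m] x :=
    condExp_mul_of_stronglyMeasurable_left hq hqY (hY.integrable one_le_two)
  simp_rw [mul_sub]
  rw [integral_sub hqY hqM, ← integral_condExp hm, integral_congr_ae pull_out, sub_self]

lemma integral_sq_sub_eq_add_integral_sq_sub_condExp (hm : m ≤ m₀) (hY : MemLp Y 2 μ)
    (hq : StronglyMeasurable[m] q) (hq₂ : MemLp q 2 μ) :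
    ∫ x, (Y x - q x) ^ 2 ∂μ = ∫ x, (Y x - μ[Y|m] x) ^ 2 ∂μ + ∫ x, (q x - μ[Y|m] x) ^ 2 ∂μ := by
  have hM : MemLp (μ[Y|m]) 2 μ := hY.condExp one_le_two
  have hqM : MemLp (fun x => q x - μ[Y|m] x) 2 μ := hq₂.sub hM
  have hYM : MemLp (fun x => Y x - μ[Y|m] x) 2 μ := hY.sub hM
  have orth : ∫ x, (q x - μ[Y|m] x) * (Y x - μ[Y|m] x) ∂μ = 0 :=
    integral_mul_sub_condExp_eq_zero hm hY (hq.sub stronglyMeasurable_condExp) hqM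
  have cross : Integrable (fun x => (q x - μ[Y|m] x) * (Y x - μ[Y|m] x)) μ :=
    hqM.integrable_mul hYM
  have squares : Integrable (fun x => (Y x - μ[Y|m] x) ^ 2 + (q x - μ[Y|m] x) ^ 2) μ :=
    hYM.integrable_sq.add hqM.integrable_sq
  calc ∫ x, (Y x - q x) ^ 2 ∂μ
      = ∫ x, ((Y x - μ[Y|m] x) ^ 2 + (q x - μ[Y|m] x) ^ 2
          - 2 * ((q x - μ[Y|m] x) * (Y x - μ[Y|m] x))) ∂μ := by
        congr 1; funext x; ring
    _ = _ := by
        rw [integral_sub squares (cross.const_mul 2),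
          integral_add hYM.integrable_sq hqM.integrable_sq, integral_const_mul, orth, mul_zero,
          sub_zero]

lemma lintegral_sq_sub_eq_add_lintegral_sq_sub_condExp (hm : m ≤ m₀) (hY : MemLp Y 2 μ)
    (hq : StronglyMeasurable[m] q) :
    ∫⁻ x, ENNReal.ofReal ((Y x - q x) ^ 2) ∂μ =
      ∫⁻ x, ENNReal.ofReal ((Y x - μ[Y|m] x) ^ 2) ∂μ +
        ∫⁻ x, ENNReal.ofReal ((q x - μ[Y|m] x) ^ 2) ∂μ := by
  have hM : MemLp (μ[Y|m]) 2 μ := hY.condExp one_le_two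
  have hq' : AEStronglyMeasurable q μ := (hq.mono hm).aestronglyMeasurable
  by_cases hq₂ : MemLp q 2 μ
  · rw [lintegral_ofReal_sq_eq_ofReal_integral (f := fun x => Y x - q x) (hY.sub hq₂),
      lintegral_ofReal_sq_eq_ofReal_integral (f := fun x => Y x - μ[Y|m] x) (hY.sub hM),
      lintegral_ofReal_sq_eq_ofReal_integral (f := fun x => q x - μ[Y|m] x) (hq₂.sub hM),
      ← ENNReal.ofReal_add (integral_nonneg fun x => sq_nonneg _)
        (integral_nonneg fun x => sq_nonneg _),
      integral_sq_sub_eq_add_integral_sq_sub_condExp hm hY hq hq₂]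
  · have hYq : ∫⁻ x, ENNReal.ofReal ((Y x - q x) ^ 2) ∂μ = ⊤ := by
      rw [← not_ne_iff,
        lintegral_ofReal_sq_ne_top_iff_memLp (f := fun x => Y x - q x) (hY.1.sub hq')]
      exact fun h => hq₂ (by convert hY.sub h using 1; ext x; simp)
    have hqM : ∫⁻ x, ENNReal.ofReal ((q x - μ[Y|m] x) ^ 2) ∂μ = ⊤ := by
      rw [← not_ne_iff,
        lintegral_ofReal_sq_ne_top_iff_memLp (f := fun x => q x - μ[Y|m] x) (hq'.sub hM.1)]
      exact fun h => hq₂ (by convert h.add hM using 1; ext x; simp)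
    rw [hYq, hqM, add_top]

end ConditionalExpectation

theorem risk_le_risk_add_gap {p : ℕ} (P : Measure ((Fin p → ℝ) × ℝ)) [IsFiniteMeasure P]
    (hY : MemLp (fun ω : (Fin p → ℝ) × ℝ => ω.2) 2 P) {f g : (Fin p → ℝ) → ℝ}
    (hf : Measurable f) (hg : Measurable g) :
    risk P f ≤ risk P g + gap P f := by
  have hm : MeasurableSpace.comap Prod.fst inferInstance ≤
      (inferInstance : MeasurableSpace ((Fin p → ℝ) × ℝ)) :=
    measurable_fst.comap_le
  have hX {h : (Fin p → ℝ) → ℝ} (hh : Measurable h) :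
      StronglyMeasurable[MeasurableSpace.comap Prod.fst inferInstance]
        fun ω : (Fin p → ℝ) × ℝ => h ω.1 :=
    (hh.comp (Measurable.of_comap_le le_rfl)).stronglyMeasurable
  unfold risk gap
  rw [lintegral_sq_sub_eq_add_lintegral_sq_sub_condExp hm hY (hX hf)]
  gcongr ?_ + _
  rw [lintegral_sq_sub_eq_add_lintegral_sq_sub_condExp hm hY (hX hg)]
  exact le_self_add

theorem stmt18_general {p : ℕ}
    (Ps : Set (Measure ((Fin p → ℝ) × ℝ)))
    (hprob : ∀ P ∈ Ps, IsProbabilityMeasure P)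
    (hY2 : ∀ P ∈ Ps, MemLp (fun ω : (Fin p → ℝ) × ℝ => ω.2) 2 P)
    (Fs : Set ((Fin p → ℝ) → ℝ)) (hFsmeas : ∀ f ∈ Fs, Measurable f)
    (fstar : (Fin p → ℝ) → ℝ) (hfstar : fstar ∈ Fs)
    (ρ : ℝ≥0∞)
    (hinv : ∀ P ∈ Ps, risk P fstar = ρ)
    (hgap : ⨅ P : Ps, gap (P : Measure ((Fin p → ℝ) × ℝ)) fstar = 0) :
    (⨆ P : Ps, risk (P : Measure ((Fin p → ℝ) × ℝ)) fstar) =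
      ⨅ f : Fs, ⨆ P : Ps,
        risk (P : Measure ((Fin p → ℝ) × ℝ)) (f : (Fin p → ℝ) → ℝ) := by
  refine le_antisymm (le_iInf fun f => ?_)
    (iInf_le (fun f : Fs => ⨆ P : Ps, risk (P : Measure _) (f : (Fin p → ℝ) → ℝ)) ⟨fstar, hfstar⟩)
  have hρ_le : ρ ≤ ⨆ Q : Ps, risk (Q : Measure ((Fin p → ℝ) × ℝ)) f := by
    have hbound : ∀ P : Ps, ρ ≤ (⨆ Q : Ps, risk (Q : Measure ((Fin p → ℝ) × ℝ)) f) +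
        gap (P : Measure ((Fin p → ℝ) × ℝ)) fstar := by
      rintro ⟨P, hP⟩
      have := hprob P hP
      rw [← hinv P hP]
      exact (risk_le_risk_add_gap P (hY2 P hP) (hFsmeas _ hfstar) (hFsmeas _ f.2)).trans
        (by gcongr
            exact le_iSup (fun Q : Ps => risk (Q : Measure _) (f : (Fin p → ℝ) → ℝ)) ⟨P, hP⟩)
    have := le_iInf hbound
    rwa [← ENNReal.add_iInf, hgap, add_zero] at this
  exact iSup_le fun P => (hinv P P.2).trans_le hρ_le

/-- if `f⋆ ∈ 𝓕` has constant finite risk `ρ` over `𝒫₀` (invariance) and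
`inf_{P ∈ 𝒫₀} E_P[(f⋆(X) - E_P[Y|X])²] = 0`, then
`sup_{P ∈ 𝒫₀} R(P, f⋆) = inf_{f ∈ 𝓕} sup_{P ∈ 𝒫₀} R(P, f)`. -/
theorem stmt18 {p : ℕ}
    (Ps : Set (Measure ((Fin p → ℝ) × ℝ)))
    (hPsne : Ps.Nonempty)
    (hprob : ∀ P ∈ Ps, IsProbabilityMeasure P)
    (hY2 : ∀ P ∈ Ps, MemLp (fun ω : (Fin p → ℝ) × ℝ => ω.2) 2 P)
    (Fs : Set ((Fin p → ℝ) → ℝ)) (hFsmeas : ∀ f ∈ Fs, Measurable f)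
    (fstar : (Fin p → ℝ) → ℝ) (hfstar : fstar ∈ Fs)
    (ρ : ℝ≥0∞) (hρ : ρ ≠ ⊤)
    (hinv : ∀ P ∈ Ps, risk P fstar = ρ)
    (hgap : ⨅ P : Ps, gap (P : Measure ((Fin p → ℝ) × ℝ)) fstar = 0) :
    (⨆ P : Ps, risk (P : Measure ((Fin p → ℝ) × ℝ)) fstar) =
      ⨅ f : Fs, ⨆ P : Ps,
        risk (P : Measure ((Fin p → ℝ) × ℝ)) (f : (Fin p → ℝ) → ℝ) :=
  stmt18_general Ps hprob hY2 Fs hFsmeas fstar hfstar ρ hinv hgap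
end
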